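/- Let A₁ ≤ … ≤ A_ℓ be a chain of (m−1)-element subsets of {2,…,n} and γ = ∏_{k=1}^ℓ β_{A_k}. Then for every (i,j) ∈ V, the exponent of x_{i,j} in γ equals max{k ∈ [ℓ] : (i,j) is to the right of D_{A_k}} + ℓ − min{k ∈ [ℓ] : (i,j) is to the left of D_{A_k}} + 1, with the conventions that the max is 0 if the set is empty and the min is ℓ+1 if the set is empty. -/

import Mathlib

open MvPolynomial Finset

/-- The set `V = {(i,j) ∈ [m]×[n] : m−i < j ≤ n−i+1}` (1-based indices). -/
def Vset (m n : ℕ) : Finset (ℕ × ℕ) :=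
  ((Finset.Icc 1 m) ×ˢ (Finset.Icc 1 n)).filter
    (fun p => m - p.1 < p.2 ∧ p.2 ≤ n - p.1 + 1)

/-- `a : ℕ → ℕ` represents an `(m−1)`-element subset `A = {a 1 < … < a (m−1)} ⊆ {2,…,n}`,
together with the conventions `a 0 = 1` and `a m = n + 1`. -/
def SubsetRep (m n : ℕ) (a : ℕ → ℕ) : Prop :=
  a 0 = 1 ∧ a m = n + 1 ∧ ∀ i < m, a i < a (i + 1)

/-- The region `D_A = {(i,j) ∈ V : a_{m−i} ≤ j < a_{m−i+1}}`. -/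
def Dset (m n : ℕ) (a : ℕ → ℕ) : Finset (ℕ × ℕ) :=
  (Vset m n).filter (fun p => a (m - p.1) ≤ p.2 ∧ p.2 < a (m - p.1 + 1))

variable (K : Type*) [Field K]

/-- The squarefree monomial `β_A = ∏_{(i,j) ∈ V ∖ D_A} x_{i,j}`. -/
noncomputable def betaM (m n : ℕ) (a : ℕ → ℕ) : MvPolynomial (ℕ × ℕ) K :=
  ∏ p ∈ Vset m n \ Dset m n a, X p

/-- The antidiagonal monomial `α_j = ∏_{i=1}^m x_{m−i+1, j+i−1}`. -/
noncomputable def alphaM (m : ℕ) (j : ℕ) : MvPolynomial (ℕ × ℕ) K :=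
  ∏ i ∈ Finset.Icc 1 m, X (m - i + 1, j + i - 1)

/-- The ideal `N` generated by the monomials `β_A` for all `(m−1)`-element subsets
`A ⊆ {2,…,n}`. -/
noncomputable def Nideal (m n : ℕ) : Ideal (MvPolynomial (ℕ × ℕ) K) :=
  Ideal.span { f | ∃ a : ℕ → ℕ, SubsetRep m n a ∧ f = betaM K m n a }

/-- `A k`, `1 ≤ k ≤ s`, is a chain `A₁ ≤ … ≤ A_s` of `(m−1)`-element subsets of `{2,…,n}`,
where `≤` is the componentwise partial order. -/
def BetaChain (m n s : ℕ) (A : ℕ → ℕ → ℕ) : Prop :=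
  (∀ k, 1 ≤ k → k ≤ s → SubsetRep m n (A k)) ∧
    (∀ k, 1 ≤ k → k + 1 ≤ s → ∀ i ≤ m, A k i ≤ A (k + 1) i)

/-- `W^{[2]}` : the ideal generated by the squares of all the monomials in `W`. -/
noncomputable def bracketTwo {σ : Type*} (W : Ideal (MvPolynomial σ K)) :
    Ideal (MvPolynomial σ K) :=
  Ideal.span { g | ∃ d : σ →₀ ℕ, (monomial d (1 : K)) ∈ W ∧ g = (monomial d (1 : K)) ^ 2 }

/-- The symbolic power `I^{(n)} = ⋂_{p ∈ Min(I)} (pⁿ R_p ∩ R)`. -/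
noncomputable def symbolicPower {R : Type*} [CommRing R] (I : Ideal R) (n : ℕ) : Ideal R :=
  ⨅ p : {q : Ideal R // q ∈ I.minimalPrimes},
    letI : p.1.IsPrime := p.2.1.1
    ((p.1 ^ n).map (algebraMap R (Localization.AtPrime p.1))).comap
      (algebraMap R (Localization.AtPrime p.1))

/-! Each `β_A` is squarefree, so the exponent of `x_{i,j}` in `γ` counts the `k` with
`(i,j) ∉ D_{A_k}`, i.e. with `(i,j)` right or left of `D_{A_k}`; the two cases exclude each
other because `a_{m−i} < a_{m−i+1}`. Along the chain the `k` of the first kind form an initial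
segment `{1,…,max}` of `[ℓ]` and those of the second kind a final segment `{min,…,ℓ}`. -/

theorem MvPolynomial.degreeOf_prod_prod_X {R σ ι : Type*} [CommSemiring R] [Nontrivial R]
    [DecidableEq σ] (q : σ) (t : Finset ι) (s : ι → Finset σ) :
    degreeOf q (∏ k ∈ t, ∏ p ∈ s k, (X p : MvPolynomial σ R)) = #{k ∈ t | q ∈ s k} := by
  have hmon : (∏ k ∈ t, ∏ p ∈ s k, (X p : MvPolynomial σ R)) =
      monomial (∑ k ∈ t, ∑ p ∈ s k, Finsupp.single p 1) 1 := by
    simp only [monomial_sum_one]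
    rfl
  rw [hmon, degreeOf_monomial_eq _ _ one_ne_zero, Finsupp.finsetSum_apply, card_filter]
  refine sum_congr rfl fun k _ => ?_
  simp only [Finsupp.finsetSum_apply, Finsupp.single_apply, sum_ite_eq']

theorem Finset.card_filter_Icc_one_eq_sup {P : ℕ → Prop} [DecidablePred P] {ℓ : ℕ}
    (hP : AntitoneOn P (Set.Icc 1 ℓ)) :
    #{k ∈ Icc 1 ℓ | P k} = {k ∈ Icc 1 ℓ | P k}.sup id := by
  set S := {k ∈ Icc 1 ℓ | P k}
  rcases S.eq_empty_or_nonempty with hS | hS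
  · simp [hS]
  obtain ⟨M, hMS, hM⟩ := exists_mem_eq_sup S hS id
  have hMS' := mem_filter.1 hMS
  have hSM : S = Icc 1 M := by
    ext k
    simp only [S, mem_filter, mem_Icc]
    refine ⟨fun hk => ⟨hk.1.1, ?_⟩, fun hk => ?_⟩
    · exact (le_sup (f := id) (mem_filter.2 ⟨mem_Icc.2 hk.1, hk.2⟩)).trans hM.le
    · have hkℓ : k ∈ Set.Icc 1 ℓ := ⟨hk.1, hk.2.trans (mem_Icc.1 hMS'.1).2⟩
      exact ⟨hkℓ, hP hkℓ (coe_Icc 1 ℓ ▸ hMS'.1) hk.2 hMS'.2⟩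
  rw [hM, hSM, Nat.card_Icc, id, Nat.add_sub_cancel]

theorem Finset.card_filter_Icc_one_eq_sub_min' {P : ℕ → Prop} [DecidablePred P] {ℓ : ℕ}
    (hP : MonotoneOn P (Set.Icc 1 ℓ)) :
    #{k ∈ Icc 1 ℓ | P k} =
      ℓ + 1 - if h : {k ∈ Icc 1 ℓ | P k}.Nonempty then {k ∈ Icc 1 ℓ | P k}.min' h else ℓ + 1 := by
  set S := {k ∈ Icc 1 ℓ | P k}
  split_ifs with hS
  · have hμS := mem_filter.1 (S.min'_mem hS)
    have hSμ : S = Icc (S.min' hS) ℓ := by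
      ext k
      simp only [S, mem_filter, mem_Icc]
      refine ⟨fun hk => ⟨?_, hk.1.2⟩, fun hk => ?_⟩
      · exact S.min'_le k (mem_filter.2 ⟨mem_Icc.2 hk.1, hk.2⟩)
      · have hkℓ : k ∈ Set.Icc 1 ℓ := ⟨(mem_Icc.1 hμS.1).1.trans hk.1, hk.2⟩
        exact ⟨hkℓ, hP (coe_Icc 1 ℓ ▸ hμS.1) hkℓ hk.1 hμS.2⟩
    rw [congrArg card hSμ, Nat.card_Icc]
  · simpa [S, not_nonempty_iff_eq_empty] using hS

theorem BetaChain.monotoneOn {m n ℓ : ℕ} {A : ℕ → ℕ → ℕ} (hA : BetaChain m n ℓ A) {i : ℕ}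
    (hi : i ≤ m) : MonotoneOn (A · i) (Set.Icc 1 ℓ) :=
  monotoneOn_of_le_add_one Set.ordConnected_Icc fun k _ hk hk1 => hA.2 k hk.1 hk1.2 i hi

theorem mem_sdiff_Dset_iff {m n i j : ℕ} {a : ℕ → ℕ} (hij : (i, j) ∈ Vset m n) :
    (i, j) ∈ Vset m n \ Dset m n a ↔ a (m - i + 1) ≤ j ∨ j < a (m - i) := by
  simp only [mem_sdiff, Dset, mem_filter, hij, true_and, not_and_or, not_le, not_lt]
  tauto

theorem stmt_8 (m n ℓ : ℕ)
    (A : ℕ → ℕ → ℕ) (hA : BetaChain m n ℓ A) (i j : ℕ) (hij : (i, j) ∈ Vset m n) :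
    MvPolynomial.degreeOf (i, j) (∏ k ∈ Finset.Icc 1 ℓ, betaM K m n (A k)) =
      ((Finset.Icc 1 ℓ).filter (fun k => A k (m - i + 1) ≤ j)).sup id +
        (ℓ + 1 -
          (if h : ((Finset.Icc 1 ℓ).filter (fun k => j < A k (m - i))).Nonempty then
            ((Finset.Icc 1 ℓ).filter (fun k => j < A k (m - i))).min' h
          else ℓ + 1)) := by
  have hi : 1 ≤ i ∧ i ≤ m := by
    simp only [Vset, mem_filter, mem_product, mem_Icc] at hij
    exact ⟨hij.1.1.1, hij.1.1.2⟩
  have hdisj : Disjoint {k ∈ Icc 1 ℓ | A k (m - i + 1) ≤ j} {k ∈ Icc 1 ℓ | j < A k (m - i)} := by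
    refine disjoint_filter.2 fun k hk hright hleft => ?_
    have := (hA.1 k (mem_Icc.1 hk).1 (mem_Icc.1 hk).2).2.2 (m - i) (by omega)
    omega
  simp only [betaM]
  rw [degreeOf_prod_prod_X, filter_congr fun k _ => mem_sdiff_Dset_iff hij, filter_or,
    card_union_of_disjoint hdisj]
  congr 1
  · exact card_filter_Icc_one_eq_sup fun k hk k' hk' hkk' hright =>
      (hA.monotoneOn (by omega) hk hk' hkk').trans hright
  · exact card_filter_Icc_one_eq_sub_min' fun k hk k' hk' hkk' hleft =>
      hleft.trans_le (hA.monotoneOn (by omega) hk hk' hkk')
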